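/- Let E be a finite-valued nonnegative random variable with mean P̄_E, and let I(·,∞) denote the average-power privacy-power function. Then E_E[I(E, E)] ≥ I(P̄_E, ∞). That is, the minimum leakage with zero battery and state known at the utility provider is at least the minimum leakage with an infinite battery. -/

import Mathlib

open Finset Real

noncomputable section

/-- `w` is a probability mass function on the finite sample space `Ω`. -/
def IsPMF {Ω : Type*} [Fintype Ω] (w : Ω → ℝ) : Prop :=
  (∀ ω, 0 ≤ w ω) ∧ ∑ ω, w ω = 1

/-- Distribution (pmf) of the random variable `X` under the weight `w`. -/
def rvDist {Ω A : Type*} [Fintype Ω] [DecidableEq A] (w : Ω → ℝ) (X : Ω → A) (a : A) : ℝ :=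
  ∑ ω, if X ω = a then w ω else 0

/-- Shannon entropy (in bits) of `X` under `w`. -/
def Hent {Ω A : Type*} [Fintype Ω] [Fintype A] [DecidableEq A] (w : Ω → ℝ) (X : Ω → A) : ℝ :=
  -∑ a, rvDist w X a * Real.logb 2 (rvDist w X a)

/-- Conditional entropy `H(X | Z)` (in bits). -/
def Hcond {Ω A C : Type*} [Fintype Ω] [Fintype A] [Fintype C] [DecidableEq A] [DecidableEq C]
    (w : Ω → ℝ) (X : Ω → A) (Z : Ω → C) : ℝ :=
  Hent w (fun ω => (X ω, Z ω)) - Hent w Z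

/-- Mutual information `I(X;Y)` (in bits). -/
def MI {Ω A B : Type*} [Fintype Ω] [Fintype A] [Fintype B] [DecidableEq A] [DecidableEq B]
    (w : Ω → ℝ) (X : Ω → A) (Y : Ω → B) : ℝ :=
  Hent w X + Hent w Y - Hent w (fun ω => (X ω, Y ω))

/-- Conditional mutual information `I(X;Y|E)` (in bits). -/
def CMI {Ω A B C : Type*} [Fintype Ω] [Fintype A] [Fintype B] [Fintype C]
    [DecidableEq A] [DecidableEq B] [DecidableEq C]
    (w : Ω → ℝ) (X : Ω → A) (Y : Ω → B) (E : Ω → C) : ℝ :=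
  Hent w (fun ω => (X ω, E ω)) + Hent w (fun ω => (Y ω, E ω))
    - Hent w (fun ω => (X ω, Y ω, E ω)) - Hent w E

/-- `X` and `E` are independent under `w`. -/
def IndepRV {Ω A C : Type*} [Fintype Ω] [DecidableEq A] [DecidableEq C]
    (w : Ω → ℝ) (X : Ω → A) (E : Ω → C) : Prop :=
  ∀ a c, rvDist w (fun ω => (X ω, E ω)) (a, c) = rvDist w X a * rvDist w E c

/-- Expected energy drawn from the alternative source, `E[X - Y]`, under channel `K`. -/
def avgDraw {ι : Type*} [Fintype ι] (v p : ι → ℝ) (K : ι → ι → ℝ) : ℝ :=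
  ∑ x, ∑ y, p x * K x y * (v x - v y)

/-- `K` is a channel: nonnegative, rows summing to one, and feasible: `Y ≤ X` pointwise. -/
def IsChannel {ι : Type*} [Fintype ι] (v : ι → ℝ) (K : ι → ι → ℝ) : Prop :=
  (∀ x y, 0 ≤ K x y) ∧ (∀ x, ∑ y, K x y = 1) ∧ (∀ x y, 0 < K x y → 0 ≤ v x - v y)

/-- Mutual information `I(X;Y)` induced by the input pmf `p` and the channel `K`. -/
def chanMI {ι : Type*} [Fintype ι] [DecidableEq ι] (p : ι → ℝ) (K : ι → ι → ℝ) : ℝ :=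
  MI (fun xy : ι × ι => p xy.1 * K xy.1 xy.2) Prod.fst Prod.snd

/-- Privacy-power function with an average power constraint only: `I(P̄, ∞)`. -/
def ppfAvg {ι : Type*} [Fintype ι] [DecidableEq ι] (v p : ι → ℝ) (Pbar : ℝ) : ℝ :=
  sInf {r | ∃ K : ι → ι → ℝ, IsChannel v K ∧
    0 ≤ avgDraw v p K ∧ avgDraw v p K ≤ Pbar ∧ r = chanMI p K}

/-- Privacy-power function with average and peak power constraints: `I(P̄, P̂)`. -/
def ppfBoth {ι : Type*} [Fintype ι] [DecidableEq ι] (v p : ι → ℝ) (Pbar Phat : ℝ) : ℝ :=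
  sInf {r | ∃ K : ι → ι → ℝ, IsChannel v K ∧
    (∀ x y, 0 < K x y → v x - v y ≤ Phat) ∧
    0 ≤ avgDraw v p K ∧ avgDraw v p K ≤ Pbar ∧ r = chanMI p K}

/-!
Fix `ε > 0` and, for each value `e` of `E`, a channel `K_e` that is `ε`-optimal for `I(e, e)`;
its peak constraint `X - Y ≤ e` forces `E[X - Y] ≤ e`. The mixture `∑ₑ p_E(e) K_e` is a feasible
channel for `I(P̄_E, ∞)`, because feasibility and the average draw are linear in the channel. For a
fixed input law, mutual information is the relative entropy of the joint law to the product of its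
marginals, both of which depend linearly on the channel; joint convexity of relative entropy (the
log-sum inequality) then bounds the leakage of the mixture by `∑ₑ p_E(e) I(K_e)`.
-/
theorem mul_log_div_sum_le_sum_mul_log_div {α : Type*} (s : Finset α) {a b : α → ℝ}
    (ha : ∀ i ∈ s, 0 ≤ a i) (hb : ∀ i ∈ s, 0 ≤ b i) (hab : ∀ i ∈ s, b i = 0 → a i = 0) :
    (∑ i ∈ s, a i) * log ((∑ i ∈ s, a i) / ∑ i ∈ s, b i) ≤ ∑ i ∈ s, a i * log (a i / b i) := by
  set A := ∑ i ∈ s, a i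
  set B := ∑ i ∈ s, b i
  have hB0 : 0 ≤ B := sum_nonneg hb
  rcases hB0.eq_or_lt with hB | hB
  · have hb0 : ∀ i ∈ s, b i = 0 := (sum_eq_zero_iff_of_nonneg hb).1 hB.symm
    rw [← hB, div_zero, log_zero, mul_zero]
    exact (sum_eq_zero fun i hi => by rw [hb0 i hi, div_zero, log_zero, mul_zero]).ge
  have hcancel : ∀ i ∈ s, b i * (a i / b i) = a i := fun i hi => by
    rcases eq_or_ne (b i) 0 with h | h
    · rw [h, hab i hi h, zero_mul]
    · exact mul_div_cancel₀ _ h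
  have hmean : ∑ i ∈ s, (b i / B) • (a i / b i) = A / B := by
    rw [sum_div]
    exact sum_congr rfl fun i hi => by rw [smul_eq_mul, div_mul_eq_mul_div, hcancel i hi]
  have hrhs : ∑ i ∈ s, (b i / B) • (a i / b i * log (a i / b i))
      = (∑ i ∈ s, a i * log (a i / b i)) / B := by
    rw [sum_div]
    exact sum_congr rfl fun i hi => by
      rw [smul_eq_mul, div_mul_eq_mul_div, ← mul_assoc, hcancel i hi]
  have hjensen := convexOn_mul_log.map_sum_le (t := s) (w := fun i => b i / B)
    (p := fun i => a i / b i) (fun i hi => div_nonneg (hb i hi) hB.le)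
    (by rw [← sum_div, div_self hB.ne']) (fun i hi => div_nonneg (ha i hi) (hb i hi))
  rw [hmean, hrhs, le_div_iff₀ hB] at hjensen
  calc A * log (A / B) = A / B * log (A / B) * B := by field_simp [hB.ne']
    _ ≤ _ := hjensen

theorem mul_mul_log_div_mul_left (a b c : ℝ) :
    c * a * log (c * a / (c * b)) = c * (a * log (a / b)) := by
  rcases eq_or_ne c 0 with rfl | hc
  · simp
  · rw [mul_div_mul_left a b hc, mul_assoc]

def relEnt {α : Type*} [Fintype α] (a b : α → ℝ) : ℝ := ∑ i, a i * log (a i / b i)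

theorem relEnt_nonneg {α : Type*} [Fintype α] {a b : α → ℝ} (ha : ∀ i, 0 ≤ a i)
    (hb : ∀ i, 0 ≤ b i) (hab : ∀ i, b i = 0 → a i = 0) (hsum : ∑ i, a i = ∑ i, b i) :
    0 ≤ relEnt a b := by
  calc 0 = (∑ i, b i) * log ((∑ i, b i) / ∑ i, b i) := by
        rcases eq_or_ne (∑ i, b i) 0 with h | h <;> simp [h]
    _ ≤ relEnt a b := hsum ▸ mul_log_div_sum_le_sum_mul_log_div univ (fun i _ => ha i)
        (fun i _ => hb i) (fun i _ => hab i)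

theorem relEnt_sum_smul_le {κ α : Type*} [Fintype α] (s : Finset κ) {w : κ → ℝ}
    {a b : κ → α → ℝ} (hw : ∀ k ∈ s, 0 ≤ w k) (ha : ∀ k ∈ s, ∀ i, 0 ≤ a k i)
    (hb : ∀ k ∈ s, ∀ i, 0 ≤ b k i) (hab : ∀ k ∈ s, ∀ i, b k i = 0 → a k i = 0) :
    relEnt (∑ k ∈ s, w k • a k) (∑ k ∈ s, w k • b k) ≤ ∑ k ∈ s, w k * relEnt (a k) (b k) := by
  simp only [relEnt, Finset.sum_apply, Pi.smul_apply, smul_eq_mul, mul_sum]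
  rw [sum_comm]
  refine sum_le_sum fun i _ => ?_
  calc (∑ k ∈ s, w k * a k i) * log ((∑ k ∈ s, w k * a k i) / ∑ k ∈ s, w k * b k i)
      ≤ ∑ k ∈ s, w k * a k i * log (w k * a k i / (w k * b k i)) :=
        mul_log_div_sum_le_sum_mul_log_div s (fun k hk => mul_nonneg (hw k hk) (ha k hk i))
          (fun k hk => mul_nonneg (hw k hk) (hb k hk i)) fun k hk hwb => by
            rcases mul_eq_zero.1 hwb with h | h
            · rw [h, zero_mul]
            · rw [hab k hk i h, mul_zero]
    _ = ∑ k ∈ s, w k * (a k i * log (a k i / b k i)) :=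
        sum_congr rfl fun k _ => mul_mul_log_div_mul_left _ _ _

section Entropy

variable {Ω A B : Type*} [Fintype Ω] [DecidableEq A] [DecidableEq B] {w : Ω → ℝ}

theorem rvDist_nonneg (hw : ∀ ω, 0 ≤ w ω) (X : Ω → A) (a : A) : 0 ≤ rvDist w X a :=
  sum_nonneg fun ω _ => by split_ifs <;> simp [hw]

theorem sum_rvDist_pair_right [Fintype B] (X : Ω → A) (Y : Ω → B) (a : A) :
    ∑ b, rvDist w (fun ω => (X ω, Y ω)) (a, b) = rvDist w X a := by
  simp only [rvDist, Prod.mk.injEq, ite_and]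
  rw [sum_comm]
  simp

theorem sum_rvDist_pair_left [Fintype A] (X : Ω → A) (Y : Ω → B) (b : B) :
    ∑ a, rvDist w (fun ω => (X ω, Y ω)) (a, b) = rvDist w Y b := by
  simp only [rvDist, Prod.mk.injEq, ite_and]
  rw [sum_comm]
  simp

theorem rvDist_pair_le_left [Fintype B] (hw : ∀ ω, 0 ≤ w ω) (X : Ω → A) (Y : Ω → B)
    (a : A) (b : B) :
    rvDist w (fun ω => (X ω, Y ω)) (a, b) ≤ rvDist w X a :=
  sum_rvDist_pair_right X Y a ▸
    single_le_sum (fun b' _ => rvDist_nonneg hw _ (a, b')) (mem_univ b)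

theorem rvDist_pair_le_right [Fintype A] (hw : ∀ ω, 0 ≤ w ω) (X : Ω → A) (Y : Ω → B)
    (a : A) (b : B) :
    rvDist w (fun ω => (X ω, Y ω)) (a, b) ≤ rvDist w Y b :=
  sum_rvDist_pair_left X Y b ▸
    single_le_sum (fun a' _ => rvDist_nonneg hw _ (a', b)) (mem_univ a)

theorem MI_eq_relEnt [Fintype A] [Fintype B] (hw : ∀ ω, 0 ≤ w ω) (X : Ω → A) (Y : Ω → B) :
    MI w X Y = relEnt (rvDist w fun ω => (X ω, Y ω))
      (fun ab => rvDist w X ab.1 * rvDist w Y ab.2) / log 2 := by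
  set P := rvDist w fun ω => (X ω, Y ω)
  have hX : Hent w X = -∑ ab : A × B, P ab * logb 2 (rvDist w X ab.1) := by
    simp only [Hent, Fintype.sum_prod_type, ← sum_mul, P, sum_rvDist_pair_right]
  have hY : Hent w Y = -∑ ab : A × B, P ab * logb 2 (rvDist w Y ab.2) := by
    rw [Hent, Fintype.sum_prod_type, sum_comm]
    simp only [← sum_mul, P, sum_rvDist_pair_left]
  have hterm : ∀ ab : A × B, P ab * log (P ab / (rvDist w X ab.1 * rvDist w Y ab.2)) / log 2
      = P ab * logb 2 (P ab) - P ab * logb 2 (rvDist w X ab.1)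
        - P ab * logb 2 (rvDist w Y ab.2) := by
    rintro ⟨a, b⟩
    rcases eq_or_ne (P (a, b)) 0 with h | h
    · simp [h]
    have hPpos : 0 < P (a, b) := h.symm.lt_of_le (rvDist_nonneg hw _ _)
    have hXa := hPpos.trans_le (rvDist_pair_le_left hw X Y a b)
    have hYb := hPpos.trans_le (rvDist_pair_le_right hw X Y a b)
    rw [log_div h (mul_ne_zero hXa.ne' hYb.ne'), log_mul hXa.ne' hYb.ne']
    simp only [logb]
    ring
  rw [MI, hX, hY, Hent, relEnt, sum_div]
  simp only [hterm, sum_sub_distrib, P]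
  ring

end Entropy

theorem rvDist_fst {α β : Type*} [Fintype α] [Fintype β] [DecidableEq α] (f : α × β → ℝ)
    (a : α) : rvDist f Prod.fst a = ∑ b, f (a, b) := by
  rw [rvDist, Fintype.sum_prod_type, sum_comm]
  simp

theorem rvDist_snd {α β : Type*} [Fintype α] [Fintype β] [DecidableEq β] (f : α × β → ℝ)
    (b : β) : rvDist f Prod.snd b = ∑ a, f (a, b) := by
  simp [rvDist, Fintype.sum_prod_type]

theorem rvDist_fst_snd {α β : Type*} [Fintype α] [Fintype β] [DecidableEq α] [DecidableEq β]
    (f : α × β → ℝ) (ab : α × β) : rvDist f (fun ω => (ω.1, ω.2)) ab = f ab := by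
  simp [rvDist]

section Channel

open Matrix

variable {ι : Type*} [Fintype ι] {p : ι → ℝ} {K : ι → ι → ℝ}

theorem chanMI_eq_relEnt [DecidableEq ι] (hp : ∀ x, 0 ≤ p x) (hK : K ∈ rowStochastic ℝ ι) :
    chanMI p K = relEnt (fun xy : ι × ι => p xy.1 * K xy.1 xy.2)
      (fun xy => p xy.1 * ∑ x, p x * K x xy.2) / log 2 := by
  rw [chanMI, MI_eq_relEnt fun xy => mul_nonneg (hp _) (hK.1 _ _)]
  congr 2 with xy
  · exact rvDist_fst_snd _ xy
  · simp only [rvDist_fst, rvDist_snd, ← mul_sum, sum_row_of_mem_rowStochastic hK, mul_one]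

theorem mul_eq_zero_of_mul_sum_eq_zero (hp : ∀ x, 0 ≤ p x) (hK : ∀ x y, 0 ≤ K x y)
    {x y : ι} (h : p x * ∑ x', p x' * K x' y = 0) : p x * K x y = 0 := by
  rcases mul_eq_zero.1 h with h | h
  · rw [h, zero_mul]
  · exact (sum_eq_zero_iff_of_nonneg fun x _ => mul_nonneg (hp x) (hK x y)).1 h x (mem_univ x)

theorem chanMI_nonneg [DecidableEq ι] (hp : IsPMF p) (hK : K ∈ rowStochastic ℝ ι) :
    0 ≤ chanMI p K := by
  have hmass : ∑ x, p x * ∑ y, K x y = 1 := by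
    simp only [sum_row_of_mem_rowStochastic hK, mul_one, hp.2]
  have hjoint : ∑ xy : ι × ι, p xy.1 * K xy.1 xy.2 = 1 := by
    rw [Fintype.sum_prod_type]
    simpa only [mul_sum] using hmass
  have hprod : ∑ xy : ι × ι, p xy.1 * ∑ x, p x * K x xy.2 = 1 := by
    simp only [Fintype.sum_prod_type]
    rw [← sum_mul_sum, hp.2, one_mul, sum_comm]
    simpa only [mul_sum] using hmass
  rw [chanMI_eq_relEnt hp.1 hK]
  refine div_nonneg (relEnt_nonneg (fun _ => mul_nonneg (hp.1 _) (hK.1 _ _))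
    (fun _ => mul_nonneg (hp.1 _) (sum_nonneg fun _ _ => mul_nonneg (hp.1 _) (hK.1 _ _)))
    (fun _ => mul_eq_zero_of_mul_sum_eq_zero hp.1 hK.1) (hjoint.trans hprod.symm))
    (log_nonneg one_le_two)

end Channel

theorem sum_smul_apply_apply {ι κ : Type*} [Fintype κ] (w : κ → ℝ) (K : κ → ι → ι → ℝ)
    (x y : ι) : (∑ k, w k • K k) x y = ∑ k, w k * K k x y := by
  simp only [Finset.sum_apply, Pi.smul_apply, smul_eq_mul]

section Mixture

open Matrix

variable {ι κ : Type*} [Fintype ι] [Fintype κ] {w : κ → ℝ} {K : κ → ι → ι → ℝ}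

theorem sum_smul_mem_rowStochastic [DecidableEq ι] (hw : IsPMF w)
    (hK : ∀ k, K k ∈ rowStochastic ℝ ι) : ∑ k, w k • K k ∈ rowStochastic ℝ ι :=
  convex_rowStochastic.sum_mem (fun k _ => hw.1 k) hw.2 fun k _ => hK k

theorem chanMI_sum_smul_le [DecidableEq ι] {p : ι → ℝ} (hp : ∀ x, 0 ≤ p x) (hw : IsPMF w)
    (hK : ∀ k, K k ∈ rowStochastic ℝ ι) :
    chanMI p (∑ k, w k • K k) ≤ ∑ k, w k * chanMI p (K k) := by
  simp only [chanMI_eq_relEnt hp (sum_smul_mem_rowStochastic hw hK), chanMI_eq_relEnt hp (hK _),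
    mul_div_assoc', ← sum_div]
  have hjoint : (fun xy : ι × ι => p xy.1 * (∑ k, w k • K k) xy.1 xy.2)
      = ∑ k, w k • fun xy : ι × ι => p xy.1 * K k xy.1 xy.2 := by
    ext xy
    simp only [sum_smul_apply_apply, Finset.sum_apply, Pi.smul_apply, smul_eq_mul, mul_sum]
    exact sum_congr rfl fun k _ => by ring
  have hprod : (fun xy : ι × ι => p xy.1 * ∑ x, p x * (∑ k, w k • K k) x xy.2)
      = ∑ k, w k • fun xy : ι × ι => p xy.1 * ∑ x, p x * K k x xy.2 := by
    ext xy
    simp only [sum_smul_apply_apply, Finset.sum_apply, Pi.smul_apply, smul_eq_mul, mul_sum]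
    rw [sum_comm]
    exact sum_congr rfl fun k _ => sum_congr rfl fun x _ => by ring
  rw [hjoint, hprod]
  exact div_le_div_of_nonneg_right (relEnt_sum_smul_le univ (fun k _ => hw.1 k)
    (fun k _ _ => mul_nonneg (hp _) ((hK k).1 _ _))
    (fun k _ _ => mul_nonneg (hp _) (sum_nonneg fun _ _ => mul_nonneg (hp _) ((hK k).1 _ _)))
    (fun k _ _ => mul_eq_zero_of_mul_sum_eq_zero hp (hK k).1)) (log_nonneg one_le_two)

theorem IsChannel.mem_rowStochastic [DecidableEq ι] {v : ι → ℝ} {K : ι → ι → ℝ}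
    (h : IsChannel v K) : K ∈ rowStochastic ℝ ι :=
  mem_rowStochastic_iff_sum.2 ⟨h.1, h.2.1⟩

theorem IsChannel.sum_smul {v : ι → ℝ} (hw : IsPMF w) (hK : ∀ k, IsChannel v (K k)) :
    IsChannel v (∑ k, w k • K k) := by
  classical
  obtain ⟨h0, h1⟩ := mem_rowStochastic_iff_sum.1
    (sum_smul_mem_rowStochastic hw fun k => (hK k).mem_rowStochastic)
  refine ⟨h0, h1, fun x y hxy => ?_⟩
  rw [sum_smul_apply_apply, ← sum_const_zero] at hxy
  obtain ⟨k, -, hk⟩ := exists_lt_of_sum_lt hxy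
  exact (hK k).2.2 x y (pos_of_mul_pos_right hk (hw.1 k))

theorem avgDraw_sum_smul (v p : ι → ℝ) (w : κ → ℝ) (K : κ → ι → ι → ℝ) :
    avgDraw v p (∑ k, w k • K k) = ∑ k, w k * avgDraw v p (K k) := by
  simp only [avgDraw, sum_smul_apply_apply, mul_sum, sum_mul]
  conv_rhs => rw [sum_comm]
  refine sum_congr rfl fun x _ => ?_
  rw [sum_comm]
  exact sum_congr rfl fun y _ => sum_congr rfl fun k _ => by ring

end Mixture

theorem Matrix.eq_of_one_apply_pos {ι α : Type*} [DecidableEq ι] [Zero α] [One α] [Preorder α]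
    {x y : ι} (h : 0 < (1 : Matrix ι ι α) x y) : x = y := by
  by_contra hxy
  simp [Matrix.one_apply_ne hxy] at h

section PrivacyPower

open Matrix

variable {ι : Type*} [Fintype ι] [DecidableEq ι]

theorem isChannel_one (v : ι → ℝ) : IsChannel v (1 : Matrix ι ι ℝ) := by
  obtain ⟨h0, h1⟩ := mem_rowStochastic_iff_sum.1 (one_mem (rowStochastic ℝ ι))
  refine ⟨h0, h1, fun x y hxy => ?_⟩
  rw [eq_of_one_apply_pos hxy, sub_self]

theorem avgDraw_one (v p : ι → ℝ) : avgDraw v p (1 : Matrix ι ι ℝ) = 0 := by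
  simp [avgDraw, one_apply]

theorem exists_chanMI_lt_ppfBoth_add (v p : ι → ℝ) {Pbar Phat ε : ℝ} (hPbar : 0 ≤ Pbar)
    (hPhat : 0 ≤ Phat) (hε : 0 < ε) :
    ∃ K : ι → ι → ℝ, IsChannel v K ∧ 0 ≤ avgDraw v p K ∧ avgDraw v p K ≤ Pbar ∧
      chanMI p K < ppfBoth v p Pbar Phat + ε := by
  have hpeak : ∀ x y, 0 < (1 : Matrix ι ι ℝ) x y → v x - v y ≤ Phat := fun x y hxy => by
    rwa [eq_of_one_apply_pos hxy, sub_self]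
  -- `by exact` postpones the witness until the second argument has fixed the set
  obtain ⟨_, ⟨K, hK, -, h0, h1, rfl⟩, hlt⟩ := exists_lt_of_csInf_lt
    (by exact ⟨_, (1 : Matrix ι ι ℝ), isChannel_one v, hpeak, (avgDraw_one v p).ge,
      (avgDraw_one v p).trans_le hPbar, rfl⟩) (lt_add_of_pos_right (ppfBoth v p Pbar Phat) hε)
  exact ⟨K, hK, h0, h1, hlt⟩

theorem ppfAvg_le_chanMI {v p : ι → ℝ} {K : ι → ι → ℝ} {Pbar : ℝ} (hp : IsPMF p)
    (hK : IsChannel v K) (h0 : 0 ≤ avgDraw v p K) (h1 : avgDraw v p K ≤ Pbar) :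
    ppfAvg v p Pbar ≤ chanMI p K :=
  csInf_le ⟨0, by rintro _ ⟨K', hK', -, -, rfl⟩; exact chanMI_nonneg hp hK'.mem_rowStochastic⟩
    ⟨K, hK, h0, h1, rfl⟩

end PrivacyPower

theorem expected_ppf_ge_ppf_of_mean_general {ι κ : Type*} [Fintype ι] [DecidableEq ι] [Fintype κ]
    (v p : ι → ℝ) (hp : IsPMF p)
    (vE pE : κ → ℝ) (hpE : IsPMF pE) (hvE : ∀ k, 0 ≤ vE k) :
    ppfAvg v p (∑ k, pE k * vE k) ≤ ∑ k, pE k * ppfBoth v p (vE k) (vE k) := by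
  refine le_of_forall_pos_le_add fun ε hε => ?_
  choose K hK h0 h1 hlt using fun k => exists_chanMI_lt_ppfBoth_add v p (hvE k) (hvE k) hε
  calc ppfAvg v p (∑ k, pE k * vE k) ≤ chanMI p (∑ k, pE k • K k) := by
        refine ppfAvg_le_chanMI hp (IsChannel.sum_smul hpE hK) ?_ ?_ <;> rw [avgDraw_sum_smul]
        · exact sum_nonneg fun k _ => mul_nonneg (hpE.1 k) (h0 k)
        · exact sum_le_sum fun k _ => mul_le_mul_of_nonneg_left (h1 k) (hpE.1 k)
    _ ≤ ∑ k, pE k * chanMI p (K k) :=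
        chanMI_sum_smul_le hp.1 hpE fun k => (hK k).mem_rowStochastic
    _ ≤ ∑ k, pE k * (ppfBoth v p (vE k) (vE k) + ε) :=
        sum_le_sum fun k _ => mul_le_mul_of_nonneg_left (hlt k).le (hpE.1 k)
    _ = ∑ k, pE k * ppfBoth v p (vE k) (vE k) + ε := by
        simp only [mul_add, sum_add_distrib, ← sum_mul, hpE.2, one_mul]

/-- for a finite-valued nonnegative harvested energy `E` (pmf `pE`, values `vE`,
mean `P̄_E = ∑ k, pE k * vE k`), the zero-battery, state-known-at-UP leakage `E_E[I(E,E)]`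
is at least the infinite-battery leakage `I(P̄_E, ∞)`. -/
theorem expected_ppf_ge_ppf_of_mean {ι κ : Type*} [Fintype ι] [DecidableEq ι] [Fintype κ]
    (v p : ι → ℝ) (hp : IsPMF p) (hv : ∀ i, 0 ≤ v i)
    (vE pE : κ → ℝ) (hpE : IsPMF pE) (hvE : ∀ k, 0 ≤ vE k) :
    ppfAvg v p (∑ k, pE k * vE k) ≤ ∑ k, pE k * ppfBoth v p (vE k) (vE k) :=
  expected_ppf_ge_ppf_of_mean_general v p hp vE pE hpE hvE
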